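/- Let p ≥ 5 be a prime, e ≥ 1 an integer, and A, B ∈ ℤ with p not dividing 4A³ + 27B². Then the number of primitive triples (X, Y, Z) ∈ (ℤ/p^eℤ)³ satisfying Y²·Z = X³ + A·X·Z² + B·Z³ equals p^(2(e−1)) times the number of nonzero triples (x, y, z) ∈ (ℤ/pℤ)³ satisfying y²·z = x³ + A·x·z² + B·z³. (This expresses that the projective curve over ℤ/p^eℤ has p^(e−1) times as many points as its reduction modulo p.) -/

import Mathlib

/-!
Reduction `ZMod (p ^ (k + 1)) → ZMod (p ^ k)` is onto with kernel `J` of order `p` and `J² = 0`.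
Fix a primitive solution `v` modulo `p ^ k` and a lift `w₀`. For `d ∈ J³` the cubic form `F`
satisfies `F (w₀ + d) = F w₀ + ∇F(w₀) · d`, and `∇F(w₀)` is primitive because the curve is
smooth modulo `p` (`p ∤ 4A³ + 27B²`, `p ≥ 5`). Hence `d ↦ ∇F(w₀) · d` maps `J³` onto `J`, and
exactly `|J|² = p²` lifts of `v` are solutions; induction on `e` gives the factor `p ^ (2(e - 1))`.
-/

open Function

theorem AddMonoidHom.card_ker_mul_card_of_surjective {G H : Type*} [AddGroup G] [AddGroup H]
    {f : G →+ H} (hf : Surjective f) : Nat.card f.ker * Nat.card H = Nat.card G := by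
  rw [← f.ker.card_mul_index, AddSubgroup.index_ker, AddMonoidHom.range_eq_top.mpr hf,
    AddSubgroup.card_top]

theorem RingHom.card_ker_mul_card_of_surjective {R S : Type*} [Ring R] [Ring S] {f : R →+* S}
    (hf : Surjective f) : Nat.card (RingHom.ker f) * Nat.card S = Nat.card R :=
  (f : R →+ S).card_ker_mul_card_of_surjective hf

variable {R S : Type*} [CommRing R] [CommRing S]

theorem Ideal.eq_top_of_map_eq_top {f : R →+* S} (hf : Surjective f)
    (hker : ∀ x ∈ RingHom.ker f, IsNilpotent x) {I : Ideal R} (hI : I.map f = ⊤) : I = ⊤ := by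
  obtain ⟨i, hiI, hi⟩ :=
    (Ideal.mem_map_iff_of_surjective f hf).mp (hI ▸ Submodule.mem_top (x := 1))
  have hnil : IsNilpotent (1 - i) :=
    hker _ (by rw [RingHom.mem_ker, map_sub, map_one, hi, sub_self])
  refine I.eq_top_of_isUnit_mem hiI ?_
  simpa using hnil.isUnit_one_sub

theorem Ideal.map_span_triple (f : R →+* S) (x y z : R) :
    (Ideal.span {x, y, z}).map f = Ideal.span {f x, f y, f z} := by
  simp [Ideal.map_span, Set.image_insert_eq]

abbrev RingHom.tripleMap (f : R →+* S) : R × R × R →+* S × S × S := f.prodMap (f.prodMap f)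

theorem RingHom.tripleMap_surjective {f : R →+* S} (hf : Surjective f) :
    Surjective f.tripleMap :=
  hf.prodMap (hf.prodMap hf)

theorem RingHom.mem_ker_tripleMap {f : R →+* S} {d : R × R × R} :
    d ∈ RingHom.ker f.tripleMap ↔
      d.1 ∈ RingHom.ker f ∧ d.2.1 ∈ RingHom.ker f ∧ d.2.2 ∈ RingHom.ker f := by
  simp [RingHom.mem_ker]

def IsPrimitive (v : R × R × R) : Prop := Ideal.span {v.1, v.2.1, v.2.2} = ⊤

theorem isPrimitive_iff_ne_zero {K : Type*} [Field K] (v : K × K × K) :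
    IsPrimitive v ↔ v ≠ 0 := by
  rcases (Ideal.span {v.1, v.2.1, v.2.2}).eq_bot_or_top with h | h
  · rw [Ideal.span_eq_bot] at h
    simp_all [IsPrimitive, Prod.ext_iff]
  · simp only [IsPrimitive, h, true_iff]
    rintro rfl
    simp_all

theorem IsPrimitive.map (f : R →+* S) {v : R × R × R} (hv : IsPrimitive v) :
    IsPrimitive (f.tripleMap v) := by
  have h := congrArg (Ideal.map f) hv
  rwa [Ideal.map_span_triple, Ideal.map_top] at h

theorem IsPrimitive.of_map {f : R →+* S} (hf : Surjective f)
    (hker : ∀ x ∈ RingHom.ker f, IsNilpotent x) {v : R × R × R}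
    (hv : IsPrimitive (f.tripleMap v)) : IsPrimitive v :=
  Ideal.eq_top_of_map_eq_top hf hker (by rw [Ideal.map_span_triple]; exact hv)

theorem IsPrimitive.exists_dot_eq_one {g : R × R × R} (hg : IsPrimitive g) :
    ∃ r : R × R × R, r.1 * g.1 + r.2.1 * g.2.1 + r.2.2 * g.2.2 = 1 := by
  obtain ⟨r₁, z, hz, h⟩ := Ideal.mem_span_insert.mp (hg ▸ Submodule.mem_top (x := (1 : R)))
  obtain ⟨r₂, r₃, rfl⟩ := Ideal.mem_span_pair.mp hz
  exact ⟨(r₁, r₂, r₃), by rw [h]; ring⟩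

theorem card_ker_tripleMap [Finite R] {π : R →+* S} (hπ : Surjective π) :
    Nat.card (RingHom.ker π.tripleMap) = Nat.card (RingHom.ker π) ^ 3 := by
  have h₁ := RingHom.card_ker_mul_card_of_surjective hπ
  have h₃ := RingHom.card_ker_mul_card_of_surjective (RingHom.tripleMap_surjective hπ)
  simp only [Nat.card_prod, ← h₁] at h₃
  have : 0 < Nat.card S := Nat.card_pos_iff.mpr ⟨inferInstance, Finite.of_surjective _ hπ⟩
  apply Nat.eq_of_mul_eq_mul_right (pow_pos this 3)
  linear_combination h₃

def RingHom.kerDot (π : R →+* S) (g : R × R × R) : RingHom.ker π.tripleMap →+ RingHom.ker π :=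
  AddMonoidHom.mk' (fun d => ⟨g.1 * d.1.1 + g.2.1 * d.1.2.1 + g.2.2 * d.1.2.2, by
      obtain ⟨h₁, h₂, h₃⟩ := RingHom.mem_ker_tripleMap.mp d.2
      exact add_mem (add_mem (Ideal.mul_mem_left _ _ h₁) (Ideal.mul_mem_left _ _ h₂))
        (Ideal.mul_mem_left _ _ h₃)⟩)
    (fun d e => by ext; simp only [Submodule.coe_add, Prod.fst_add, Prod.snd_add]; ring)

theorem RingHom.coe_kerDot (π : R →+* S) (g : R × R × R) (d : RingHom.ker π.tripleMap) :
    (π.kerDot g d : R) = g.1 * d.1.1 + g.2.1 * d.1.2.1 + g.2.2 * d.1.2.2 :=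
  rfl

theorem RingHom.kerDot_surjective (π : R →+* S) {g : R × R × R} (hg : IsPrimitive g) :
    Surjective (π.kerDot g) := by
  obtain ⟨r, hr⟩ := hg.exists_dot_eq_one
  intro j
  refine ⟨⟨(j * r.1, j * r.2.1, j * r.2.2), RingHom.mem_ker_tripleMap.mpr
    ⟨Ideal.mul_mem_right _ _ j.2, Ideal.mul_mem_right _ _ j.2, Ideal.mul_mem_right _ _ j.2⟩⟩, ?_⟩
  ext
  rw [RingHom.coe_kerDot]
  linear_combination (j : R) * hr

/-- The zeros of `F` in the fibre through `w₀` form a fibre of `π.kerDot g`, which is onto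
`ker π`; so there are `|ker π|³ / |ker π|` of them. -/
theorem card_zeros_in_fiber_eq_card_ker_sq [Finite R] {π : R →+* S} (hπ : Surjective π)
    (F : R × R × R → R) (w₀ g : R × R × R) (hg : IsPrimitive g) (hF₀ : F w₀ ∈ RingHom.ker π)
    (hF : ∀ d ∈ RingHom.ker π.tripleMap,
      F (w₀ + d) = F w₀ + (g.1 * d.1 + g.2.1 * d.2.1 + g.2.2 * d.2.2)) :
    Nat.card {w // π.tripleMap w = π.tripleMap w₀ ∧ F w = 0} = Nat.card (RingHom.ker π) ^ 2 := by
  set c : RingHom.ker π := ⟨-F w₀, neg_mem hF₀⟩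
  have hzero (d : RingHom.ker π.tripleMap) : F (w₀ + d) = 0 ↔ π.kerDot g d = c := by
    rw [hF d d.2, Subtype.ext_iff, RingHom.coe_kerDot]
    constructor <;> intro h <;> linear_combination h
  let e : {w // π.tripleMap w = π.tripleMap w₀ ∧ F w = 0} ≃ π.kerDot g ⁻¹' {c} :=
    { toFun := fun w => ⟨⟨w - w₀, by rw [RingHom.mem_ker, map_sub, w.2.1, sub_self]⟩,
        (hzero _).mp (by rw [add_sub_cancel]; exact w.2.2)⟩
      invFun := fun d => ⟨w₀ + d.1, by rw [map_add, RingHom.mem_ker.mp d.1.2, add_zero],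
        (hzero d).mpr d.2⟩
      left_inv := fun w => by ext <;> simp
      right_inv := fun d => by ext <;> simp }
  have hL := π.kerDot_surjective hg
  rw [Nat.card_congr (e.trans (AddMonoidHom.fiberEquivKerOfSurjective hL _))]
  apply Nat.eq_of_mul_eq_mul_right (Nat.card_pos (α := RingHom.ker π))
  rw [AddMonoidHom.card_ker_mul_card_of_surjective hL, card_ker_tripleMap hπ]
  ring

def weierstrassCubic (a b : R) (v : R × R × R) : R :=
  v.1 ^ 3 + a * v.1 * v.2.2 ^ 2 + b * v.2.2 ^ 3 - v.2.1 ^ 2 * v.2.2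

def weierstrassGradient (a b : R) (v : R × R × R) : R × R × R :=
  (3 * v.1 ^ 2 + a * v.2.2 ^ 2, -(2 * v.2.1 * v.2.2),
    2 * a * v.1 * v.2.2 + 3 * b * v.2.2 ^ 2 - v.2.1 ^ 2)

theorem weierstrassCubic_map (f : R →+* S) (a b : R) (v : R × R × R) :
    f (weierstrassCubic a b v) = weierstrassCubic (f a) (f b) (f.tripleMap v) := by
  simp [weierstrassCubic]

theorem weierstrassGradient_map (f : R →+* S) (a b : R) (v : R × R × R) :
    f.tripleMap (weierstrassGradient a b v) =
      weierstrassGradient (f a) (f b) (f.tripleMap v) := by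
  simp [weierstrassGradient, map_ofNat]

theorem weierstrassCubic_add {J : Ideal R} (hJ : ∀ x ∈ J, ∀ y ∈ J, x * y = 0) (a b : R)
    (w d : R × R × R) (h₁ : d.1 ∈ J) (h₂ : d.2.1 ∈ J) (h₃ : d.2.2 ∈ J) :
    weierstrassCubic a b (w + d) = weierstrassCubic a b w +
      ((weierstrassGradient a b w).1 * d.1 + (weierstrassGradient a b w).2.1 * d.2.1 +
        (weierstrassGradient a b w).2.2 * d.2.2) := by
  simp only [weierstrassCubic, weierstrassGradient, Prod.fst_add, Prod.snd_add]
  linear_combination (3 * w.1 + d.1) * hJ _ h₁ _ h₁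
    + (a * (w.1 + d.1) + b * (3 * w.2.2 + d.2.2)) * hJ _ h₃ _ h₃
    + 2 * a * w.2.2 * hJ _ h₁ _ h₃ - (w.2.2 + d.2.2) * hJ _ h₂ _ h₂ - 2 * w.2.1 * hJ _ h₂ _ h₃

theorem weierstrassGradient_ne_zero {K : Type*} [Field K] {a b : K} (h2 : (2 : K) ≠ 0)
    (h3 : (3 : K) ≠ 0) (hdisc : 4 * a ^ 3 + 27 * b ^ 2 ≠ 0) {v : K × K × K} (hv : v ≠ 0) :
    weierstrassGradient a b v ≠ 0 := by
  obtain ⟨x, y, z⟩ := v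
  simp only [weierstrassGradient, ne_eq, Prod.mk_eq_zero] at hv ⊢
  rintro ⟨hx, hy, hz⟩
  have hz0 : z ≠ 0 := by
    rintro rfl
    exact hv ⟨by simpa [h3] using hx, by simpa using hz, rfl⟩
  obtain rfl : y = 0 := by simpa [h2, hz0] using hy
  -- eliminating `x` between the two remaining partial derivatives leaves the discriminant
  have : (4 * a ^ 3 + 27 * b ^ 2) * z ^ 6 = 0 := by
    linear_combination (4 * (3 * x ^ 2 + a * z ^ 2) ^ 2 - 24 * x ^ 2 * (3 * x ^ 2 + a * z ^ 2)
      + 36 * x ^ 4 - 12 * x * z * (2 * a * x * z + 3 * b * z ^ 2)) * hx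
      + (3 * z ^ 2 * (2 * a * x * z + 3 * b * z ^ 2) + 36 * x ^ 3 * z) * hz
  simp [hdisc, hz0] at this

theorem IsPrimitive.weierstrassGradient {K : Type*} [Field K] {f : R →+* K} (hf : Surjective f)
    (hker : ∀ x ∈ RingHom.ker f, IsNilpotent x) (h2 : (2 : K) ≠ 0) (h3 : (3 : K) ≠ 0)
    {a b : R} (hdisc : 4 * f a ^ 3 + 27 * f b ^ 2 ≠ 0) {v : R × R × R} (hv : IsPrimitive v) :
    IsPrimitive (weierstrassGradient a b v) := by
  refine .of_map hf hker ?_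
  rw [weierstrassGradient_map, isPrimitive_iff_ne_zero]
  exact weierstrassGradient_ne_zero h2 h3 hdisc ((isPrimitive_iff_ne_zero _).mp (hv.map f))

def primitivePoints (a b : R) : Set (R × R × R) :=
  {v | IsPrimitive v ∧ weierstrassCubic a b v = 0}

theorem mem_primitivePoints {a b : R} {v : R × R × R} :
    v ∈ primitivePoints a b ↔
      IsPrimitive v ∧ v.2.1 ^ 2 * v.2.2 = v.1 ^ 3 + a * v.1 * v.2.2 ^ 2 + b * v.2.2 ^ 3 :=
  and_congr_right' <| by rw [weierstrassCubic, sub_eq_zero, eq_comm]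

theorem card_primitivePoints_eq_card_ker_sq_mul [Finite R] {π : R →+* S} (hπ : Surjective π)
    (hker : ∀ x ∈ RingHom.ker π, ∀ y ∈ RingHom.ker π, x * y = 0) (a b : R)
    (hsmooth : ∀ v ∈ primitivePoints (π a) (π b),
      IsPrimitive (weierstrassGradient (π a) (π b) v)) :
    Nat.card (primitivePoints a b) =
      Nat.card (RingHom.ker π) ^ 2 * Nat.card (primitivePoints (π a) (π b)) := by
  have hnil : ∀ x ∈ RingHom.ker π, IsNilpotent x :=
    fun x hx => ⟨2, by rw [sq]; exact hker x hx x hx⟩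
  let Φ : primitivePoints a b → primitivePoints (π a) (π b) := fun w =>
    ⟨π.tripleMap w, w.2.1.map π, by rw [← weierstrassCubic_map, w.2.2, map_zero]⟩
  have hfiber (v : primitivePoints (π a) (π b)) :
      Nat.card {w // Φ w = v} = Nat.card (RingHom.ker π) ^ 2 := by
    obtain ⟨w₀, hw₀⟩ := RingHom.tripleMap_surjective hπ v.1
    have hgrad : IsPrimitive (weierstrassGradient a b w₀) :=
      .of_map hπ hnil (by rw [weierstrassGradient_map, hw₀]; exact hsmooth v v.2)
    have hF₀ : weierstrassCubic a b w₀ ∈ RingHom.ker π := by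
      rw [RingHom.mem_ker, weierstrassCubic_map, hw₀]; exact v.2.2
    rw [← card_zeros_in_fiber_eq_card_ker_sq hπ _ w₀ _ hgrad hF₀ fun d hd => by
      obtain ⟨h₁, h₂, h₃⟩ := RingHom.mem_ker_tripleMap.mp hd
      exact weierstrassCubic_add hker a b w₀ d h₁ h₂ h₃]
    refine Nat.card_congr ((Equiv.subtypeEquivRight fun w => Subtype.ext_iff).trans
      ((Equiv.subtypeSubtypeEquivSubtypeInter _ (fun w => π.tripleMap w = v.1)).trans
        (Equiv.subtypeEquivRight fun w => ?_)))
    rw [hw₀]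
    exact ⟨fun h => ⟨h.2, h.1.2⟩, fun h => ⟨⟨.of_map hπ hnil (h.1 ▸ v.2.1), h.2⟩, h.1⟩⟩
  have : Finite S := Finite.of_surjective _ hπ
  have : Fintype (primitivePoints (π a) (π b)) := Fintype.ofFinite _
  rw [Nat.card_congr (Equiv.sigmaFiberEquiv Φ).symm, Nat.card_sigma]
  simp [hfiber, Nat.card_eq_fintype_card, mul_comm]

namespace ZMod

theorem natCast_ne_zero_of_lt {n p : ℕ} (h0 : n ≠ 0) (h : n < p) : (n : ZMod p) ≠ 0 := by
  rw [Ne, natCast_eq_zero_iff]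
  exact Nat.not_dvd_of_pos_of_lt (Nat.pos_of_ne_zero h0) h

theorem natCast_dvd_of_castHom_eq_zero {d n : ℕ} [NeZero n] (h : d ∣ n) {x : ZMod n}
    (hx : castHom h (ZMod d) x = 0) : (d : ZMod n) ∣ x := by
  rw [← natCast_zmod_val x, map_natCast, natCast_eq_zero_iff] at hx
  obtain ⟨c, hc⟩ := hx
  exact ⟨c, by rw [← natCast_zmod_val x, hc, Nat.cast_mul]⟩

theorem pow_eq_zero_of_mem_ker_castHom {d n k : ℕ} [NeZero n] (h : d ∣ n) (hn : n ∣ d ^ k)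
    {x : ZMod n} (hx : x ∈ RingHom.ker (castHom h (ZMod d))) : x ^ k = 0 := by
  obtain ⟨c, rfl⟩ := natCast_dvd_of_castHom_eq_zero h hx
  rw [mul_pow, ← Nat.cast_pow, (natCast_eq_zero_iff _ _).mpr hn, zero_mul]

theorem mul_eq_zero_of_mem_ker_castHom {d n : ℕ} [NeZero n] (h : d ∣ n) (hn : n ∣ d ^ 2)
    {x y : ZMod n} (hx : x ∈ RingHom.ker (castHom h (ZMod d)))
    (hy : y ∈ RingHom.ker (castHom h (ZMod d))) : x * y = 0 := by
  obtain ⟨c, rfl⟩ := natCast_dvd_of_castHom_eq_zero h hx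
  obtain ⟨c', rfl⟩ := natCast_dvd_of_castHom_eq_zero h hy
  rw [mul_mul_mul_comm, ← sq, ← Nat.cast_pow, (natCast_eq_zero_iff _ _).mpr hn, zero_mul]

theorem card_ker_castHom_pow_succ {p k : ℕ} [NeZero p] :
    Nat.card (RingHom.ker (castHom (pow_dvd_pow p k.le_succ) (ZMod (p ^ k)))) = p := by
  have h := RingHom.card_ker_mul_card_of_surjective (castHom_surjective (pow_dvd_pow p k.le_succ))
  rw [Nat.card_zmod, Nat.card_zmod] at h
  exact Nat.eq_of_mul_eq_mul_right (pow_pos (NeZero.pos p) k) (h.trans (pow_succ' p k))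

end ZMod

section PrimePower

variable {p : ℕ} [Fact p.Prime] {A B : ℤ}

theorem isPrimitive_weierstrassGradient_zmod (hp5 : 5 ≤ p)
    (hdisc : ¬ ((p : ℤ) ∣ 4 * A ^ 3 + 27 * B ^ 2)) {k : ℕ} (hk : k ≠ 0)
    {v : ZMod (p ^ k) × ZMod (p ^ k) × ZMod (p ^ k)} (hv : IsPrimitive v) :
    IsPrimitive (weierstrassGradient (A : ZMod (p ^ k)) (B : ZMod (p ^ k)) v) := by
  have hdvd : p ∣ p ^ k := dvd_pow_self p hk
  refine hv.weierstrassGradient (ZMod.castHom_surjective hdvd)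
    (fun x hx => ⟨k, ZMod.pow_eq_zero_of_mem_ker_castHom hdvd dvd_rfl hx⟩)
    (mod_cast ZMod.natCast_ne_zero_of_lt (n := 2) two_ne_zero (by omega))
    (mod_cast ZMod.natCast_ne_zero_of_lt (n := 3) three_ne_zero (by omega)) ?_
  rw [map_intCast, map_intCast, Ne, ← ZMod.intCast_zmod_eq_zero_iff_dvd] at *
  exact_mod_cast hdisc

theorem card_primitivePoints_zmod_pow_succ (hp5 : 5 ≤ p)
    (hdisc : ¬ ((p : ℤ) ∣ 4 * A ^ 3 + 27 * B ^ 2)) {k : ℕ} (hk : k ≠ 0) :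
    Nat.card (primitivePoints (A : ZMod (p ^ (k + 1))) (B : ZMod (p ^ (k + 1)))) =
      p ^ 2 * Nat.card (primitivePoints (A : ZMod (p ^ k)) (B : ZMod (p ^ k))) := by
  have hdvd : p ^ k ∣ p ^ (k + 1) := pow_dvd_pow p k.le_succ
  have := card_primitivePoints_eq_card_ker_sq_mul (ZMod.castHom_surjective hdvd)
    (fun x hx y hy => ZMod.mul_eq_zero_of_mem_ker_castHom hdvd
      (by rw [← pow_mul]; exact pow_dvd_pow p (by omega)) hx hy) A B ?_
  · simpa only [map_intCast, ZMod.card_ker_castHom_pow_succ] using this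
  · simp only [map_intCast]
    exact fun v hv => isPrimitive_weierstrassGradient_zmod hp5 hdisc hk hv.1

theorem card_primitivePoints_zmod_pow (hp5 : 5 ≤ p)
    (hdisc : ¬ ((p : ℤ) ∣ 4 * A ^ 3 + 27 * B ^ 2)) {k : ℕ} (hk : 1 ≤ k) :
    Nat.card (primitivePoints (A : ZMod (p ^ k)) (B : ZMod (p ^ k))) =
      p ^ (2 * (k - 1)) * Nat.card (primitivePoints (A : ZMod p) (B : ZMod p)) := by
  induction k, hk using Nat.le_induction with
  | base => rw [pow_one, Nat.sub_self, mul_zero, pow_zero, one_mul]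
  | succ k hk ih =>
    rw [card_primitivePoints_zmod_pow_succ hp5 hdisc (by omega), ih, ← mul_assoc, ← pow_add]
    congr 2
    omega

end PrimePower

theorem card_primitive_triples_eq_pow_mul_card_reduction
    {p : ℕ} (hp : p.Prime) (hp5 : 5 ≤ p) {e : ℕ} (he : 1 ≤ e)
    (A B : ℤ) (hdisc : ¬ ((p : ℤ) ∣ 4 * A ^ 3 + 27 * B ^ 2)) :
    Nat.card {v : ZMod (p ^ e) × ZMod (p ^ e) × ZMod (p ^ e) //
        Ideal.span ({v.1, v.2.1, v.2.2} : Set (ZMod (p ^ e))) = ⊤ ∧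
        v.2.1 ^ 2 * v.2.2 =
          v.1 ^ 3 + (A : ZMod (p ^ e)) * v.1 * v.2.2 ^ 2 +
            (B : ZMod (p ^ e)) * v.2.2 ^ 3} =
      p ^ (2 * (e - 1)) *
        Nat.card {w : ZMod p × ZMod p × ZMod p //
          w ≠ 0 ∧
          w.2.1 ^ 2 * w.2.2 =
            w.1 ^ 3 + (A : ZMod p) * w.1 * w.2.2 ^ 2 + (B : ZMod p) * w.2.2 ^ 3} := by
  have : Fact p.Prime := ⟨hp⟩
  calc _ = Nat.card (primitivePoints (A : ZMod (p ^ e)) (B : ZMod (p ^ e))) :=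
        Nat.card_congr (Equiv.subtypeEquivRight fun v => mem_primitivePoints.symm)
    _ = _ := card_primitivePoints_zmod_pow hp5 hdisc he
    _ = _ := congrArg _ (Nat.card_congr (Equiv.subtypeEquivRight fun w => by
        rw [mem_primitivePoints, isPrimitive_iff_ne_zero]))
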